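/- arXiv:2005.08193 — 3 statements merged into one kernel-verified Lean document; each statement's English description precedes it below -/
import Mathlib

section
/- Let 0 < ε ≤ r ≤ 1/2 and let R be a rectangle centered at distance about r from the origin o, whose radial width is at most 3ε, whose tangential length is at most √ε, and which contains the annular sector A of the circle c_o of radius r (as in the construction). Then every point of the homothetic copy R* of R scaled by factor 3 about its center lies at distance at most 5ε from the circle c_o of radius r centered at o. -/
open Real

/-! The dilated rectangle is a box around the point (r, 0): by `1 - t²/2 ≤ cos t ≤ 1` with
`t = √ε/2`, its radial side lies within `25ε/8` of `r`, and by `|sin t| ≤ t` its tangential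
half-length is at most `3(r+ε)√ε/2`. The inner bound `|q| ≥ x ≥ r - 5ε` is immediate; for the
outer one the tangential extent contributes only `O(ε)` to `|q|²` by Pythagoras, which the slack
between `25ε/8` and `5ε` absorbs. -/

lemma abs_sqrt_sq_add_sq_sub_le {ρ δ x y : ℝ} (hρδ : 0 ≤ ρ + δ) (hx : ρ - δ ≤ x)
    (hxy : x ^ 2 + y ^ 2 ≤ (ρ + δ) ^ 2) : |√(x ^ 2 + y ^ 2) - ρ| ≤ δ := by
  have hlow : x ≤ √(x ^ 2 + y ^ 2) :=
    le_sqrt_of_sq_le (le_add_of_nonneg_right (sq_nonneg y))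
  have hup : √(x ^ 2 + y ^ 2) ≤ ρ + δ := (sqrt_le_left hρδ).2 hxy
  rw [abs_le]
  constructor <;> linarith

lemma one_sub_div_eight_le_cos_sqrt_div_two {ε : ℝ} (hε : 0 ≤ ε) :
    1 - ε / 8 ≤ cos (√ε / 2) := by
  have h := one_sub_sq_div_two_le_cos (x := √ε / 2)
  rwa [div_pow, sq_sqrt hε, div_div, show (2 : ℝ) ^ 2 * 2 = 8 by norm_num] at h

lemma sin_sqrt_div_two_sq_le {ε : ℝ} (hε : 0 ≤ ε) : sin (√ε / 2) ^ 2 ≤ ε / 4 := by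
  have h := sin_sq_le_sq (x := √ε / 2)
  rwa [div_pow, sq_sqrt hε, show (2 : ℝ) ^ 2 = 4 by norm_num] at h

lemma abs_sub_le_of_abs_sub_center_le {ε r c x : ℝ} (hε : 0 ≤ ε) (her : ε ≤ r) (hr : r ≤ 1 / 2)
    (hc : 1 - ε / 8 ≤ c) (hc₁ : c ≤ 1)
    (hx : |x - ((r - ε) * c + (r + ε)) / 2| ≤ 3 * (((r + ε) - (r - ε) * c) / 2)) :
    |x - r| ≤ 25 * ε / 8 := by
  obtain ⟨hxl, hxu⟩ := abs_le.1 hx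
  have hrε : 0 ≤ r - ε := sub_nonneg.2 her
  have hlow : (r - ε) * (1 - ε / 8) ≤ (r - ε) * c := mul_le_mul_of_nonneg_left hc hrε
  have hup : (r - ε) * c ≤ r - ε := mul_le_of_le_one_right hrε hc₁
  rw [abs_le]
  constructor <;> nlinarith

/-- Let 0 < ε ≤ r ≤ 1/2 and let R be the smallest enclosing rectangle of the annular
sector A = {u : r−ε ≤ |u| ≤ r+ε, angle in [−√ε/2, √ε/2]}, namely
R = [(r−ε)cos(√ε/2), r+ε] × [−(r+ε)sin(√ε/2), (r+ε)sin(√ε/2)].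
Then every point (x,y) of the homothetic copy R* of R scaled by factor 3 about its
center lies at distance at most 5ε from the circle of radius r centered at the
origin, i.e. |√(x²+y²) − r| ≤ 5ε. -/
theorem stmt7 (ε r x y : ℝ) (hε : 0 < ε) (her : ε ≤ r) (hr : r ≤ 1 / 2)
    (hx : |x - ((r - ε) * Real.cos (Real.sqrt ε / 2) + (r + ε)) / 2| ≤
      3 * (((r + ε) - (r - ε) * Real.cos (Real.sqrt ε / 2)) / 2))
    (hy : |y| ≤ 3 * ((r + ε) * Real.sin (Real.sqrt ε / 2))) :
    |Real.sqrt (x ^ 2 + y ^ 2) - r| ≤ 5 * ε := by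
  have hx' : |x - r| ≤ 25 * ε / 8 :=
    abs_sub_le_of_abs_sub_center_le hε.le her hr
      (one_sub_div_eight_le_cos_sqrt_div_two hε.le) (cos_le_one _) hx
  have hy' : y ^ 2 ≤ 9 * (r + ε) ^ 2 * (ε / 4) :=
    calc y ^ 2 ≤ (3 * ((r + ε) * sin (√ε / 2))) ^ 2 := sq_le_sq.2 (hy.trans (le_abs_self _))
      _ = 9 * (r + ε) ^ 2 * sin (√ε / 2) ^ 2 := by ring
      _ ≤ 9 * (r + ε) ^ 2 * (ε / 4) := by gcongr; exact sin_sqrt_div_two_sq_le hε.le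
  obtain ⟨hxl, hxu⟩ := abs_le.1 hx'
  have hx2 : x ^ 2 ≤ (r + 25 * ε / 8) ^ 2 := sq_le_sq' (by linarith) (by linarith)
  have hrε_sq : (r + ε) ^ 2 ≤ r + ε := by nlinarith
  apply abs_sqrt_sq_add_sq_sub_le (by linarith) (by linarith)
  nlinarith
end

section
/- Let 0 < ε ≤ r with r ≤ 1/2 and let p, q be points with ||pq| − r| ≤ ε. Let o be a point with |op| ≤ 3δ/√2 where δ ≪ r (specifically sin β ≤ (3δ/√2)/r < 1/2 for β = ∠obp). Let b be the point on ray oq with |pb| = r, lying between o and q. Then |qb| ≤ ε / cos β; in particular |qb| ≤ 2ε when β ≤ π/3. -/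
/-!
Write β = ∠obp and x = |qb|. Since |op| < r = |pb|, the law of cosines in triangle obp gives
cos β > 0; in particular b ≠ o, so the angle of triangle pbq at b is π − β. The law of
cosines there reads |pq|² = r² + x² + 2rx cos β, and with |pq| ≤ r + ε this forces x cos β ≤ ε.
-/

open Real EuclideanGeometry

namespace EuclideanGeometry

variable {V P : Type*} [NormedAddCommGroup V] [InnerProductSpace ℝ V] [MetricSpace P]
  [NormedAddTorsor V P]

theorem cos_angle_pos_of_dist_lt {o b p : P} (h : dist o p < dist p b) :
    0 < Real.cos (∠ o b p) := by
  by_contra! hcos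
  have hlaw := law_cos o b p
  nlinarith [mul_nonpos_of_nonneg_of_nonpos
    (mul_nonneg (dist_nonneg (x := o) (y := b)) (dist_nonneg (x := p) (y := b))) hcos,
    mul_self_lt_mul_self dist_nonneg h, mul_self_nonneg (dist o b)]

theorem dist_sq_eq_of_wbtw {o b q : P} (p : P) (hbtw : Wbtw ℝ o b q) (hob : o ≠ b) :
    dist p q ^ 2 =
      dist p b ^ 2 + dist q b ^ 2 + 2 * dist p b * dist q b * Real.cos (∠ o b p) := by
  rcases eq_or_ne b q with rfl | hbq
  · simp
  have hsupp : ∠ p b q = π - ∠ o b p := by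
    linarith [angle_add_angle_eq_pi_of_angle_eq_pi p (Sbtw.angle₁₂₃_eq_pi ⟨hbtw, hob.symm, hbq⟩),
      angle_comm p b o]
  rw [sq, law_cos p b q, hsupp, Real.cos_pi_sub]
  ring

end EuclideanGeometry

theorem mul_le_of_sq_add_sq_add_two_mul_le {r x c ε : ℝ} (hr : 0 ≤ r) (hx : 0 ≤ x) (hε : 0 ≤ ε)
    (hc : c ≤ 1) (h : r ^ 2 + x ^ 2 + 2 * r * x * c ≤ (r + ε) ^ 2) : x * c ≤ ε := by
  by_contra! hlt
  have hεx : ε < x := hlt.trans_le (mul_le_of_le_one_right hx hc)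
  nlinarith [mul_le_mul_of_nonneg_left hlt.le hr]

theorem stmt17_general (o p q b : EuclideanSpace ℝ (Fin 2)) (r ε δ : ℝ)
    (hε : 0 < ε) (her : ε ≤ r)
    (hpq : |dist p q - r| ≤ ε)
    (hop : dist o p ≤ 3 * δ / Real.sqrt 2)
    (hb : b ∈ segment ℝ o q) (hpb : dist p b = r)
    (hsin' : (3 * δ / Real.sqrt 2) / r < 1 / 2) :
    dist q b ≤ ε / Real.cos (∠ o b p) ∧
    (∠ o b p ≤ π / 3 → dist q b ≤ 2 * ε) := by
  have hr : 0 < r := hε.trans_le her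
  have hop_lt : dist o p < dist p b := by
    have := (div_lt_iff₀ hr).mp hsin'
    linarith
  have hcos := cos_angle_pos_of_dist_lt hop_lt
  have hob : o ≠ b := by
    rintro rfl
    simp [angle_self_left] at hcos
  have hpq_le : dist p q ≤ dist p b + ε := by linarith [(abs_le.mp hpq).2]
  have key : dist q b * Real.cos (∠ o b p) ≤ ε :=
    mul_le_of_sq_add_sq_add_two_mul_le dist_nonneg dist_nonneg hε.le (cos_le_one _) <| by
      rw [← dist_sq_eq_of_wbtw p (mem_segment_iff_wbtw.mp hb) hob]
      gcongr
  refine ⟨(le_div_iff₀ hcos).mpr key, fun hβ => ?_⟩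
  have hcos_half : 1 / 2 ≤ Real.cos (∠ o b p) := by
    rw [← cos_pi_div_three]
    exact cos_le_cos_of_nonneg_of_le_pi (angle_nonneg o b p) (by linarith [pi_pos]) hβ
  nlinarith [dist_nonneg (x := q) (y := b)]

/-- Let 0 < ε ≤ r ≤ 1/2 and points p, q with ||pq| − r| ≤ ε. Let o satisfy
|op| ≤ 3δ/√2 with δ ≪ r, specifically sin β ≤ (3δ/√2)/r < 1/2 for β = ∠obp.
Let b be the point on ray oq with |pb| = r, lying between o and q. Then
|qb| ≤ ε / cos β; in particular |qb| ≤ 2ε when β ≤ π/3. -/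
theorem stmt17 (o p q b : EuclideanSpace ℝ (Fin 2)) (r ε δ : ℝ)
    (hε : 0 < ε) (her : ε ≤ r) (hr : r ≤ 1 / 2)
    (hpq : |dist p q - r| ≤ ε)
    (hop : dist o p ≤ 3 * δ / Real.sqrt 2)
    (hb : b ∈ segment ℝ o q) (hpb : dist p b = r)
    (hsin : Real.sin (∠ o b p) ≤ (3 * δ / Real.sqrt 2) / r)
    (hsin' : (3 * δ / Real.sqrt 2) / r < 1 / 2) :
    dist q b ≤ ε / Real.cos (∠ o b p) ∧
    (∠ o b p ≤ π / 3 → dist q b ≤ 2 * ε) :=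
  stmt17_general o p q b r ε δ hε her hpq hop hb hpb hsin'
end

section
/- Let 0 < ε, 0 < r, with ε ≤ r/16. Points o, u, v, p in the plane satisfy: |pu| = r, |uv| ≤ 10rδ₂, and the angle γ = ∠puv satisfies |π/2 − γ| ≤ 3δ₁/r + πδ₂, where δ₁, δ₂ > 0 with δ₁δ₂ = √2·ε and δ₂ ≤ √(ε/r). Then ||pv| − r| ≤ C·ε for an absolute constant C. -/
open Real EuclideanGeometry

/-!
By the law of cosines, `|pv|² - r² = |uv|² - 2r|uv| cos ∠puv`, and `|cos ∠puv| ≤ |π/2 - ∠puv|`,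
so the hypotheses make `||pv|² - r²|` at most `|uv|² + 20r²δ₂(3δ₁/r + πδ₂) ≤ C r ε`, using
`δ₁δ₂ = √2 ε` and `r δ₂² ≤ ε`. Dividing `||pv|² - r²| = ||pv| - r| (|pv| + r)` by `|pv| + r ≥ r`
gives `||pv| - r| ≤ C ε`.
-/

theorem Real.abs_cos_le_abs_pi_div_two_sub (θ : ℝ) : |cos θ| ≤ |π / 2 - θ| := by
  rw [← sin_pi_div_two_sub]
  exact abs_sin_le_abs

theorem abs_sub_le_abs_sq_sub_sq_div {a r : ℝ} (ha : 0 ≤ a) (hr : 0 < r) :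
    |a - r| ≤ |a ^ 2 - r ^ 2| / r := by
  rw [le_div_iff₀ hr, sq_sub_sq, abs_mul, abs_of_pos (by positivity : 0 < a + r), mul_comm]
  gcongr
  linarith

section LawCos

variable {V P : Type*} [NormedAddCommGroup V] [InnerProductSpace ℝ V] [MetricSpace P]
  [NormedAddTorsor V P]

theorem EuclideanGeometry.abs_dist_sq_sub_dist_sq_le (p u v : P) :
    |dist p v ^ 2 - dist p u ^ 2| ≤
      dist u v ^ 2 + 2 * dist p u * dist u v * |π / 2 - ∠ p u v| := by
  have hlaw : dist p v ^ 2 - dist p u ^ 2 =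
      dist u v ^ 2 - 2 * dist p u * dist u v * cos (∠ p u v) := by
    rw [dist_comm u v]
    linear_combination law_cos p u v
  calc |dist p v ^ 2 - dist p u ^ 2|
      ≤ |dist u v ^ 2| + |2 * dist p u * dist u v * cos (∠ p u v)| := hlaw ▸ abs_sub _ _
    _ = dist u v ^ 2 + 2 * dist p u * dist u v * |cos (∠ p u v)| := by
      rw [abs_of_nonneg (sq_nonneg _), abs_mul, abs_of_nonneg (by positivity)]
    _ ≤ dist u v ^ 2 + 2 * dist p u * dist u v * |π / 2 - ∠ p u v| := by
      gcongr dist u v ^ 2 + _ * ?_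
      exact abs_cos_le_abs_pi_div_two_sub _

end LawCos

theorem sq_add_two_mul_mul_mul_le {ε r δ₁ δ₂ d θ : ℝ} (hε : 0 ≤ ε) (hr : 0 < r)
    (hδ₂ : 0 ≤ δ₂) (hprod : δ₁ * δ₂ = √2 * ε) (hδ₂_le : δ₂ ≤ √(ε / r))
    (hd₀ : 0 ≤ d) (hd : d ≤ 10 * r * δ₂) (hθ₀ : 0 ≤ θ) (hθ : θ ≤ 3 * δ₁ / r + π * δ₂) :
    d ^ 2 + 2 * r * d * θ ≤ (100 + 60 * √2 + 20 * π) * ε * r := by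
  have hδ₂_sq : r * δ₂ ^ 2 ≤ ε := by
    rw [← le_div_iff₀' hr]
    exact (le_sqrt hδ₂ (by positivity)).mp hδ₂_le
  calc d ^ 2 + 2 * r * d * θ
      ≤ (10 * r * δ₂) ^ 2 + 2 * r * (10 * r * δ₂) * (3 * δ₁ / r + π * δ₂) := by gcongr
    _ = 60 * r * (δ₁ * δ₂) + (100 + 20 * π) * r * (r * δ₂ ^ 2) := by
        field_simp
        ring
    _ ≤ 60 * r * (√2 * ε) + (100 + 20 * π) * r * ε := by
        rw [hprod]
        gcongr
    _ = (100 + 60 * √2 + 20 * π) * ε * r := by ring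

/-- There is an absolute constant C such that: for 0 < ε, 0 < r with ε ≤ r/16, and
parameters δ₁, δ₂ > 0 with δ₁δ₂ = √2·ε and δ₂ ≤ √(ε/r), if points p, u, v in the
plane satisfy |pu| = r, |uv| ≤ 10rδ₂, and the angle γ = ∠puv satisfies
|π/2 − γ| ≤ 3δ₁/r + πδ₂, then ||pv| − r| ≤ C·ε. -/
theorem stmt19 : ∃ C : ℝ, 0 < C ∧
    ∀ (ε r δ₁ δ₂ : ℝ) (p u v : EuclideanSpace ℝ (Fin 2)),
      0 < ε → 0 < r → ε ≤ r / 16 → 0 < δ₁ → 0 < δ₂ →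
      δ₁ * δ₂ = Real.sqrt 2 * ε → δ₂ ≤ Real.sqrt (ε / r) →
      dist p u = r → dist u v ≤ 10 * r * δ₂ →
      |π / 2 - ∠ p u v| ≤ 3 * δ₁ / r + π * δ₂ →
      |dist p v - r| ≤ C * ε := by
  refine ⟨100 + 60 * √2 + 20 * π, by positivity, ?_⟩
  intro ε r δ₁ δ₂ p u v hε hr _ _ hδ₂ hprod hδ₂_le hpu huv hangle
  have hlaw := abs_dist_sq_sub_dist_sq_le p u v
  rw [hpu] at hlaw
  calc |dist p v - r|
      ≤ |dist p v ^ 2 - r ^ 2| / r := abs_sub_le_abs_sq_sub_sq_div dist_nonneg hr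
    _ ≤ (dist u v ^ 2 + 2 * r * dist u v * |π / 2 - ∠ p u v|) / r := by gcongr
    _ ≤ (100 + 60 * √2 + 20 * π) * ε := by
      rw [div_le_iff₀ hr]
      exact sq_add_two_mul_mul_mul_le hε.le hr hδ₂.le hprod hδ₂_le dist_nonneg huv
        (abs_nonneg _) hangle
end
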